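/- Let F be a field, A ∈ F^n⊗F^m a tensor, and let U ⊆ F^n⊗F^m be a subspace spanned by linearly independent pure tensors u_1⊗v_1,…,u_s⊗v_s. For 1 ≤ i ≤ s define t_i ∈ (F^2)^{⊗s} to be the pure tensor e_1⊗…⊗e_1⊗e_2⊗e_1⊗…⊗e_1 with e_2 in the i-th position, and define t_{s+1} = e_1⊗e_1⊗…⊗e_1 ∈ (F^2)^{⊗s}. Define the tensor à = u_1⊗v_1⊗t_1 + … + u_s⊗v_s⊗t_s + A⊗t_{s+1} ∈ F^n⊗F^m⊗(F^2)^{⊗s}. Then rank(Ã) = s + rank(A,U), where rank(A,U) = min{rank(B) : B ∈ A+U} and rank denotes tensor rank (here à is regarded as a tensor of order s+2, i.e., rank with respect to pure tensors in F^n⊗F^m⊗F^2⊗…⊗F^2). -/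

import Mathlib

/-!
Upper bound: if `A + ∑ cₖ uₖ ⊗ vₖ` has rank `r`, then, because `tₖ - cₖ t_{s+1}` is again a pure
tensor, `Ã = ∑ uₖ ⊗ vₖ ⊗ (tₖ - cₖ t_{s+1}) + (A + ∑ cₖ uₖ ⊗ vₖ) ⊗ t_{s+1}` is a sum of `s + r`
pure tensors.

Lower bound, by induction on the number of terms `uₖ ⊗ vₖ ⊗ tₖ`: contracting a decomposition of
`Ã` with the dual basis vector of `tᵢ` recovers `uᵢ ⊗ vᵢ ≠ 0`, so some pure term has a nonzero
`e₂`-coordinate in the `i`-th factor. Applying `e₁ ↦ e₁, e₂ ↦ c e₁` in that factor, with `c` chosen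
to kill this term, yields a decomposition with one term fewer of the tensor of the same shape in
which the `i`-th term is dropped and `A` is replaced by `A + c uᵢ ⊗ vᵢ ∈ A + U`. When no terms are
left, contracting with the dual of `t_{s+1}` writes that element of `A + U` as a sum of the
remaining pure tensors.
-/

open TensorProduct

/-- The tensor rank of a second-order tensor `T ∈ Fⁿ ⊗ Fᵐ`: the smallest number of
pure tensors `x ⊗ y` summing to `T`. -/
noncomputable def tensorRank2 {F : Type*} [Field F] {n m : ℕ}
    (T : (Fin n → F) ⊗[F] (Fin m → F)) : ℕ :=
  sInf {r : ℕ | ∃ (x : Fin r → Fin n → F) (y : Fin r → Fin m → F),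
    T = ∑ i : Fin r, x i ⊗ₜ[F] y i}

/-- `rank(A, U) = min { rank B | B ∈ A + U }`. -/
noncomputable def rankAU {F : Type*} [Field F] {n m : ℕ}
    (A : (Fin n → F) ⊗[F] (Fin m → F))
    (U : Submodule F ((Fin n → F) ⊗[F] (Fin m → F))) : ℕ :=
  sInf {r : ℕ | ∃ u ∈ U, tensorRank2 (A + u) = r}

/-- The tensor rank of an element of `Fⁿ ⊗ Fᵐ ⊗ (F²)^{⊗ s}`, regarded as a tensor of
order `s + 2`: the smallest number of pure tensors `x ⊗ y ⊗ w₁ ⊗ ⋯ ⊗ w_s` summing to it. -/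
noncomputable def tensorRankOrderS2 {F : Type*} [Field F] {n m s : ℕ}
    (T : ((Fin n → F) ⊗[F] (Fin m → F)) ⊗[F]
      PiTensorProduct F (fun _ : Fin s => Fin 2 → F)) : ℕ :=
  sInf {r : ℕ | ∃ (x : Fin r → Fin n → F) (y : Fin r → Fin m → F)
      (w : Fin r → Fin s → Fin 2 → F),
    T = ∑ j : Fin r, (x j ⊗ₜ[F] y j) ⊗ₜ[F] PiTensorProduct.tprod F (w j)}

open Finset

theorem Finset.sum_eq_sum_fin_card {ι M : Type*} [AddCommMonoid M] (J : Finset ι) (f : ι → M) :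
    ∑ j ∈ J, f j = ∑ i : Fin #J, f (J.equivFin.symm i) := by
  rw [← J.sum_coe_sort, ← J.equivFin.symm.sum_comp]

theorem Pi.single_left_inj {ι M : Type*} [DecidableEq ι] [Zero M] {i j : ι} {b : M} (hb : b ≠ 0) :
    (Pi.single i b : ι → M) = Pi.single j b ↔ i = j :=
  ⟨fun h => by_contra fun hij => hb (by simpa [hij] using congrFun h i), fun h => h ▸ rfl⟩

section BinaryTensors

variable {R ι W : Type*} [CommRing R] [AddCommGroup W] [Module R W]

/-- The map `e₁ ↦ e₁, e₂ ↦ c e₁`. -/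
def collapse (c : R) : (Fin 2 → R) →ₗ[R] Fin 2 → R :=
  ((LinearMap.proj 0 : (Fin 2 → R) →ₗ[R] R) + c • LinearMap.proj 1).smulRight (Pi.single 0 1)

theorem collapse_apply (c : R) (x : Fin 2 → R) :
    collapse c x = (x 0 + c * x 1) • Pi.single 0 1 := by
  simp [collapse]

noncomputable def collapseAt [DecidableEq ι] (i : ι) (c : R) :
    (⨂[R] _ : ι, Fin 2 → R) →ₗ[R] ⨂[R] _ : ι, Fin 2 → R :=
  PiTensorProduct.map (Function.update (fun _ => LinearMap.id) i (collapse c))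

theorem collapseAt_tprod [DecidableEq ι] (i : ι) (c : R) (w : ι → Fin 2 → R) :
    collapseAt i c (PiTensorProduct.tprod R w) =
      (w i 0 + c * w i 1) • PiTensorProduct.tprod R (Function.update w i (Pi.single 0 1)) := by
  have : (fun j => Function.update (fun _ => LinearMap.id) i (collapse c) j (w j)) =
      Function.update w i ((w i 0 + c * w i 1) • Pi.single 0 1) := by
    funext j
    by_cases hj : j = i
    · subst hj; simp [collapse_apply]
    · simp [hj]
  rw [collapseAt, PiTensorProduct.map_tprod, this, MultilinearMap.map_update_smul]

variable [Fintype ι]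

variable (R ι) in
/-- The product basis of `(R²)^{⊗ ι}`; the paper's `e₁, e₂` are `Pi.single 0 1, Pi.single 1 1`. -/
noncomputable def binaryTensorBasis : Module.Basis (ι → Fin 2) R (⨂[R] _ : ι, Fin 2 → R) :=
  Basis.piTensorProduct fun _ => Pi.basisFun R (Fin 2)

theorem binaryTensorBasis_apply (p : ι → Fin 2) :
    binaryTensorBasis R ι p = PiTensorProduct.tprod R fun j => Pi.single (p j) 1 := by
  simp [binaryTensorBasis]

theorem binaryTensorBasis_repr_tprod (w : ι → Fin 2 → R) (p : ι → Fin 2) :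
    (binaryTensorBasis R ι).repr (PiTensorProduct.tprod R w) p = ∏ j, w j (p j) := by
  simp [binaryTensorBasis]

theorem binaryTensorBasis_zero :
    binaryTensorBasis R ι 0 = PiTensorProduct.tprod R fun _ => Pi.single 0 1 := by
  simp [binaryTensorBasis_apply]

variable (R) in
noncomputable def contractCoord (p : ι → Fin 2) : W ⊗[R] (⨂[R] _ : ι, Fin 2 → R) →ₗ[R] W :=
  (TensorProduct.rid R W).toLinearMap ∘ₗ ((binaryTensorBasis R ι).coord p).lTensor W

@[simp]
theorem contractCoord_tmul (p : ι → Fin 2) (a : W) (t : ⨂[R] _ : ι, Fin 2 → R) :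
    contractCoord R p (a ⊗ₜ[R] t) = (binaryTensorBasis R ι).repr t p • a := by
  simp [contractCoord]

variable [DecidableEq ι]

theorem binaryTensorBasis_single (k : ι) :
    binaryTensorBasis R ι (Pi.single k 1) =
      PiTensorProduct.tprod R fun j => if j = k then Pi.single 1 1 else Pi.single 0 1 := by
  rw [binaryTensorBasis_apply]
  congr 1
  funext j
  by_cases hj : j = k <;> simp [hj]

theorem collapseAt_binaryTensorBasis (i : ι) (c : R) (q : ι → Fin 2) :
    collapseAt i c (binaryTensorBasis R ι q) =
      (if q i = 0 then 1 else c) • binaryTensorBasis R ι (Function.update q i 0) := by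
  rw [binaryTensorBasis_apply, collapseAt_tprod, binaryTensorBasis_apply]
  congr 1
  · rcases (by omega : q i = 0 ∨ q i = 1) with h | h <;> simp [h]
  · congr 1; funext j; by_cases hj : j = i <;> simp [hj]

theorem binaryTensorBasis_single_sub_smul_zero (k : ι) (c : R) :
    binaryTensorBasis R ι (Pi.single k 1) - c • binaryTensorBasis R ι 0 =
      PiTensorProduct.tprod R fun j =>
        if j = k then Pi.single 1 1 - c • Pi.single 0 1 else Pi.single 0 1 := by
  have hupd : ∀ x : Fin 2 → R, (fun j => if j = k then x else Pi.single 0 1) =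
      Function.update (fun _ => Pi.single 0 1) k x := fun x => by
    funext j; by_cases hj : j = k <;> simp [hj]
  rw [binaryTensorBasis_single, binaryTensorBasis_zero, hupd, hupd,
    MultilinearMap.map_update_sub, MultilinearMap.map_update_smul, Function.update_eq_self]

end BinaryTensors

section TildeTensor

variable (R : Type*) {ι W : Type*} [CommRing R] [Fintype ι] [DecidableEq ι] [AddCommGroup W]
  [Module R W]

/-- `Ã` with only the terms indexed by `I`: `tᵢ` and `t_{s+1}` are the basis tensors of the patterns
`Pi.single i 1` and `0`. -/
noncomputable def tildeTensor (a : ι → W) (I : Finset ι) (A : W) :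
    W ⊗[R] (⨂[R] _ : ι, Fin 2 → R) :=
  ∑ k ∈ I, a k ⊗ₜ binaryTensorBasis R ι (Pi.single k 1) + A ⊗ₜ binaryTensorBasis R ι 0

variable {R} {a : ι → W} {I : Finset ι} {A : W}

theorem contractCoord_zero_tildeTensor : contractCoord R 0 (tildeTensor R a I A) = A := by
  simp [tildeTensor]

theorem contractCoord_single_tildeTensor {i : ι} (hi : i ∈ I) :
    contractCoord R (Pi.single i 1) (tildeTensor R a I A) = a i := by
  simp [tildeTensor, Finsupp.single_apply, Pi.single_left_inj one_ne_zero, hi]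

theorem lTensor_collapseAt_tildeTensor_insert {i : ι} (hi : i ∉ I) (c : R) :
    (collapseAt i c).lTensor W (tildeTensor R a (insert i I) A) =
      tildeTensor R a I (A + c • a i) := by
  have h_single : ∀ k ∈ I, collapseAt i c (binaryTensorBasis R ι (Pi.single k 1)) =
      binaryTensorBasis R ι (Pi.single k 1) := fun k hk => by
    have hik : i ≠ k := fun h => hi (h ▸ hk)
    rw [collapseAt_binaryTensorBasis, Function.update_eq_self_iff.mpr (by simp [hik])]
    simp [hik]
  have h_self : collapseAt i c (binaryTensorBasis R ι (Pi.single i 1)) =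
      c • binaryTensorBasis R ι 0 := by
    have h_update : Function.update (Pi.single i 1 : ι → Fin 2) i 0 = 0 := by
      funext j; by_cases hj : j = i <;> simp [hj]
    simp [collapseAt_binaryTensorBasis, h_update]
  have h_zero : collapseAt i c (binaryTensorBasis R ι 0) = binaryTensorBasis R ι 0 := by
    simp [collapseAt_binaryTensorBasis]
  simp only [tildeTensor, map_add, map_sum, LinearMap.lTensor_tmul, sum_insert hi, h_self, h_zero]
  rw [sum_congr rfl fun k hk => by rw [h_single k hk], tmul_smul, smul_tmul', add_tmul]
  abel

theorem tildeTensor_eq_sum_tprod (c : ι → R) :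
    tildeTensor R a I A =
      ∑ k ∈ I, a k ⊗ₜ PiTensorProduct.tprod R (fun j =>
          if j = k then Pi.single 1 1 - c k • Pi.single 0 1 else Pi.single 0 1) +
        (A + ∑ k ∈ I, c k • a k) ⊗ₜ binaryTensorBasis R ι 0 := by
  simp only [← binaryTensorBasis_single_sub_smul_zero, tildeTensor, tmul_sub, tmul_smul, add_tmul,
    sum_tmul, smul_tmul', sum_sub_distrib]
  abel

variable {κ : Type*} {J : Finset κ} {x : κ → W} {w : κ → ι → Fin 2 → R}

theorem exists_coeff_ne_zero_of_tildeTensor_eq_sum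
    (h : tildeTensor R a I A = ∑ j ∈ J, x j ⊗ₜ PiTensorProduct.tprod R (w j))
    {i : ι} (hi : i ∈ I) (ha : a i ≠ 0) : ∃ j ∈ J, w j i 1 ≠ 0 := by
  by_contra! hw
  refine ha ?_
  rw [← contractCoord_single_tildeTensor (R := R) (a := a) (A := A) hi, h, map_sum]
  refine sum_eq_zero fun j hj => ?_
  rw [contractCoord_tmul, binaryTensorBasis_repr_tprod,
    prod_eq_zero (mem_univ i) (by simp [hw j hj]), zero_smul]

theorem tildeTensor_eq_sum_erase_of_insert [DecidableEq κ] {i : ι}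
    (h : tildeTensor R a (insert i I) A = ∑ j ∈ J, x j ⊗ₜ PiTensorProduct.tprod R (w j))
    (hi : i ∉ I) {j₀ : κ} {c : R} (hc : w j₀ i 0 + c * w j₀ i 1 = 0) :
    tildeTensor R a I (A + c • a i) = ∑ j ∈ J.erase j₀, ((w j i 0 + c * w j i 1) • x j) ⊗ₜ
      PiTensorProduct.tprod R (Function.update (w j) i (Pi.single 0 1)) := by
  rw [← lTensor_collapseAt_tildeTensor_insert hi, h, map_sum, sum_erase _ (by simp [hc])]
  simp [collapseAt_tprod, smul_tmul']

end TildeTensor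

section Rank

variable {F : Type*} [Field F] {n m s : ℕ}

theorem tensorRank2_le_card {ι : Type*} {T : (Fin n → F) ⊗[F] (Fin m → F)} (J : Finset ι)
    (x : ι → Fin n → F) (y : ι → Fin m → F) (h : T = ∑ j ∈ J, x j ⊗ₜ[F] y j) :
    tensorRank2 T ≤ #J := by
  apply Nat.sInf_le
  exact ⟨_, _, h.trans (J.sum_eq_sum_fin_card _)⟩

theorem exists_fin_tensorRank2_sum_tmul_eq (T : (Fin n → F) ⊗[F] (Fin m → F)) :
    ∃ (x : Fin (tensorRank2 T) → Fin n → F) (y : Fin (tensorRank2 T) → Fin m → F),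
      T = ∑ i, x i ⊗ₜ[F] y i := by
  obtain ⟨S, hS⟩ := TensorProduct.exists_finset T
  exact Nat.sInf_mem (s := {r | ∃ (x : Fin r → Fin n → F) (y : Fin r → Fin m → F),
    T = ∑ i, x i ⊗ₜ[F] y i}) ⟨_, _, _, hS.trans (S.sum_eq_sum_fin_card _)⟩

theorem rankAU_le_tensorRank2 {A z : (Fin n → F) ⊗[F] (Fin m → F)}
    {U : Submodule F ((Fin n → F) ⊗[F] (Fin m → F))} (hz : z ∈ U) :
    rankAU A U ≤ tensorRank2 (A + z) :=
  Nat.sInf_le ⟨z, hz, rfl⟩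

theorem exists_mem_tensorRank2_add_eq_rankAU (A : (Fin n → F) ⊗[F] (Fin m → F))
    (U : Submodule F ((Fin n → F) ⊗[F] (Fin m → F))) :
    ∃ z ∈ U, tensorRank2 (A + z) = rankAU A U :=
  Nat.sInf_mem (s := {r | ∃ z ∈ U, tensorRank2 (A + z) = r}) ⟨_, 0, U.zero_mem, rfl⟩

theorem rankAU_le_rankAU_add {A z : (Fin n → F) ⊗[F] (Fin m → F)}
    {U U' : Submodule F ((Fin n → F) ⊗[F] (Fin m → F))} (hz : z ∈ U) (hU : U' ≤ U) :
    rankAU A U ≤ rankAU (A + z) U' := by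
  obtain ⟨z', hz', hrank⟩ := exists_mem_tensorRank2_add_eq_rankAU (A + z) U'
  rw [← hrank, add_assoc]
  exact rankAU_le_tensorRank2 (U.add_mem hz (hU hz'))

theorem exists_fin_sum_eq_tildeTensor (A : (Fin n → F) ⊗[F] (Fin m → F))
    (u : Fin s → Fin n → F) (v : Fin s → Fin m → F) :
    ∃ (x : Fin (s + rankAU A (Submodule.span F (Set.range fun k => u k ⊗ₜ[F] v k))) → Fin n → F)
      (y : Fin (s + rankAU A (Submodule.span F (Set.range fun k => u k ⊗ₜ[F] v k))) → Fin m → F)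
      (w : Fin (s + rankAU A (Submodule.span F (Set.range fun k => u k ⊗ₜ[F] v k))) →
        Fin s → Fin 2 → F),
      tildeTensor F (fun k => u k ⊗ₜ[F] v k) univ A =
        ∑ j, (x j ⊗ₜ[F] y j) ⊗ₜ[F] PiTensorProduct.tprod F (w j) := by
  obtain ⟨z, hz, hrank⟩ := exists_mem_tensorRank2_add_eq_rankAU A
    (Submodule.span F (Set.range fun k => u k ⊗ₜ[F] v k))
  obtain ⟨c, rfl⟩ := (Submodule.mem_span_range_iff_exists_fun F).mp hz
  obtain ⟨x, y, hxy⟩ := exists_fin_tensorRank2_sum_tmul_eq (A + ∑ k, c k • u k ⊗ₜ[F] v k)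
  rw [← hrank]
  refine ⟨Fin.append u x, Fin.append v y,
    Fin.append (fun k j => if j = k then Pi.single 1 1 - c k • Pi.single 0 1 else Pi.single 0 1)
      (fun _ _ => Pi.single 0 1), ?_⟩
  rw [tildeTensor_eq_sum_tprod c, Fin.sum_univ_add, binaryTensorBasis_zero]
  simp only [Fin.append_left, Fin.append_right]
  rw [← sum_tmul, ← hxy]

theorem card_add_rankAU_le_card_of_tildeTensor_eq_sum {ι : Type*} [DecidableEq ι]
    {u : Fin s → Fin n → F} {v : Fin s → Fin m → F} {I : Finset (Fin s)}
    (hI : ∀ k ∈ I, u k ⊗ₜ[F] v k ≠ 0) {A : (Fin n → F) ⊗[F] (Fin m → F)} {J : Finset ι}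
    {x : ι → Fin n → F} {y : ι → Fin m → F} {w : ι → Fin s → Fin 2 → F}
    (h : tildeTensor F (fun k => u k ⊗ₜ[F] v k) I A =
      ∑ j ∈ J, (x j ⊗ₜ[F] y j) ⊗ₜ[F] PiTensorProduct.tprod F (w j)) :
    #I + rankAU A (Submodule.span F ((fun k => u k ⊗ₜ[F] v k) '' I)) ≤ #J := by
  induction I using Finset.induction_on generalizing A J x w with
  | empty =>
    have hA : A = ∑ j ∈ J, ((∏ l, w j l 0) • x j) ⊗ₜ[F] y j := by
      rw [← contractCoord_zero_tildeTensor (R := F) (a := fun k => u k ⊗ₜ[F] v k) (I := ∅)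
        (A := A), h, map_sum]
      simp [binaryTensorBasis_repr_tprod, smul_tmul']
    simpa using (rankAU_le_tensorRank2 (Submodule.zero_mem _)).trans
      (tensorRank2_le_card J _ y (by rwa [add_zero]))
  | insert i I hi ih =>
    obtain ⟨j₀, hj₀, hw⟩ := exists_coeff_ne_zero_of_tildeTensor_eq_sum h (mem_insert_self i I)
      (hI i (mem_insert_self i I))
    have hc : w j₀ i 0 + -(w j₀ i 0 / w j₀ i 1) * w j₀ i 1 = 0 := by
      field_simp; ring
    have hrest := ih (fun k hk => hI k (mem_insert_of_mem hk))
      ((tildeTensor_eq_sum_erase_of_insert h hi hc).trans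
        (sum_congr rfl fun j _ => by rw [smul_tmul']))
    have hrank := rankAU_le_rankAU_add (A := A)
      (U' := Submodule.span F ((fun k => u k ⊗ₜ[F] v k) '' I))
      (Submodule.smul_mem _ (-(w j₀ i 0 / w j₀ i 1)) (Submodule.subset_span
        (Set.mem_image_of_mem (fun k => u k ⊗ₜ[F] v k) (mem_coe.mpr (mem_insert_self i I)))))
      (Submodule.span_mono (Set.image_mono (coe_subset.mpr (subset_insert i I))))
    rw [card_insert_of_notMem hi, ← card_erase_add_one hj₀]
    omega

end Rank

/-- with `tᵢ = e₁ ⊗ ⋯ ⊗ e₂ ⊗ ⋯ ⊗ e₁` (with `e₂` in the `i`-th spot) and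
`t_{s+1} = e₁ ⊗ ⋯ ⊗ e₁` in `(F²)^{⊗ s}`, the tensor
`Ã = ∑ₖ uₖ ⊗ vₖ ⊗ tₖ + A ⊗ t_{s+1}` satisfies `rank(Ã) = s + rank(A,U)`. -/
theorem tensorRank_tilde_eq {F : Type*} [Field F] {n m s : ℕ}
    (A : (Fin n → F) ⊗[F] (Fin m → F))
    (u : Fin s → Fin n → F) (v : Fin s → Fin m → F)
    (hli : LinearIndependent F fun k : Fin s => u k ⊗ₜ[F] v k)
    (U : Submodule F ((Fin n → F) ⊗[F] (Fin m → F)))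
    (hU : U = Submodule.span F (Set.range fun k : Fin s => u k ⊗ₜ[F] v k))
    (t : Fin s → PiTensorProduct F (fun _ : Fin s => Fin 2 → F))
    (ht : ∀ i : Fin s, t i = PiTensorProduct.tprod F
      (fun j : Fin s => if j = i then (Pi.single 1 1 : Fin 2 → F) else Pi.single 0 1))
    (tLast : PiTensorProduct F (fun _ : Fin s => Fin 2 → F))
    (htLast : tLast = PiTensorProduct.tprod F
      (fun _ : Fin s => (Pi.single 0 1 : Fin 2 → F))) :
    tensorRankOrderS2
        ((∑ k : Fin s, (u k ⊗ₜ[F] v k) ⊗ₜ[F] t k) + A ⊗ₜ[F] tLast)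
      = s + rankAU A U := by
  subst hU htLast
  obtain rfl : t = fun i => binaryTensorBasis F (Fin s) (Pi.single i 1) :=
    funext fun i => (ht i).trans (binaryTensorBasis_single i).symm
  rw [← binaryTensorBasis_zero]
  change tensorRankOrderS2 (tildeTensor F (fun k => u k ⊗ₜ[F] v k) univ A) = _
  obtain ⟨x, y, w, hdecomp⟩ := exists_fin_sum_eq_tildeTensor A u v
  refine le_antisymm (Nat.sInf_le ⟨x, y, w, hdecomp⟩) (le_csInf ⟨_, x, y, w, hdecomp⟩ ?_)
  rintro r ⟨x, y, w, h⟩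
  simpa using card_add_rankAU_le_card_of_tildeTensor_eq_sum (fun k _ => hli.ne_zero k) h
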